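/- arXiv:2211.02271 — 2 statements merged into one kernel-verified Lean document; each statement's English description precedes it below -/
import Mathlib

section
/- Let {w^k} be a sequence generated by the projected gradient iteration w^{k+1} ∈ P_{A_s}(w^k − λ∇f(w^k)) with w^0 ∈ A_s, let w* be an accumulation point of {w^k} such that P_{A_s}(w* − λ∇f(w*)) is a singleton, and suppose there exists γ ∈ [0,1) such that for every J ∈ I_{w*} and all w, w′ ∈ A_J, ‖(w − λ∇f(w)) − (w′ − λ∇f(w′))‖ ≤ γ‖w − w′‖. Then the objective values converge R-linearly: there exist C > 0 and ρ ∈ (0,1) such that f(w^k) − f(w*) ≤ C·ρ^k for all k. -/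
open Filter Topology

noncomputable section

def spSet (n s : ℕ) : Set (EuclideanSpace ℝ (Fin n)) :=
  {w | (Finset.univ.filter fun i => w i ≠ 0).card ≤ s}

def projSet {n : ℕ} (A : Set (EuclideanSpace ℝ (Fin n))) (z : EuclideanSpace ℝ (Fin n)) :
    Set (EuclideanSpace ℝ (Fin n)) :=
  {y | y ∈ A ∧ ∀ x ∈ A, ‖z - y‖ ≤ ‖z - x‖}

def coordSub {n : ℕ} (J : Finset (Fin n)) : Set (EuclideanSpace ℝ (Fin n)) :=
  {w | ∀ i ∉ J, w i = 0}

def coordRestrict {n : ℕ} (J : Finset (Fin n)) (v : EuclideanSpace ℝ (Fin n)) :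
    EuclideanSpace ℝ (Fin n) :=
  (EuclideanSpace.equiv (Fin n) ℝ).symm (fun i => if i ∈ J then v i else 0)

/-!
Projected gradient is a descent method: the descent lemma together with the optimality of the
projection gives `f (w (k+1)) + c ‖w (k+1) - w k‖² ≤ f (w k)` with `c = 1/(2λ) - L/2 > 0`, so
the steps tend to `0` and the accumulation point `w*` is itself a best `s`-sparse approximation of
`z* = w* - λ ∇f(w*)`, hence the unique one. Uniqueness forces a strict gap between the entries of
`z*` kept and those discarded, and the gap survives near `z*`. Hence near `w*` a step of the method
restricts to a fixed coordinate subspace containing `w*`, where it is a `γ`-contraction, so once an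
iterate (from the convergent subsequence) is close to `w*` the whole tail converges to `w*`
geometrically; the descent lemma turns `‖w k - w*‖ = O(γ^k)` into the bound on `f (w k) - f w*`.
-/

open Finset

namespace SparseProjection

variable {n s : ℕ}

def coordSupport (v : EuclideanSpace ℝ (Fin n)) : Finset (Fin n) :=
  univ.filter fun i => v i ≠ 0

lemma mem_coordSupport {v : EuclideanSpace ℝ (Fin n)} {i : Fin n} :
    i ∈ coordSupport v ↔ v i ≠ 0 := by
  simp [coordSupport]

lemma mem_spSet_iff {v : EuclideanSpace ℝ (Fin n)} : v ∈ spSet n s ↔ #(coordSupport v) ≤ s :=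
  Iff.rfl

lemma mem_coordSub_iff {v : EuclideanSpace ℝ (Fin n)} {J : Finset (Fin n)} :
    v ∈ coordSub J ↔ coordSupport v ⊆ J := by
  simp only [coordSub, Set.mem_ofPred_eq, subset_iff, mem_coordSupport]
  exact forall_congr' fun i => not_imp_comm

lemma exists_coordSupport_subset_card_eq {v : EuclideanSpace ℝ (Fin n)} (hv : v ∈ spSet n s)
    (hsn : s ≤ n) : ∃ J : Finset (Fin n), coordSupport v ⊆ J ∧ #J = s :=
  Finset.exists_superset_card_eq (mem_spSet_iff.1 hv) (by simpa using hsn)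

lemma coordRestrict_apply (J : Finset (Fin n)) (v : EuclideanSpace ℝ (Fin n)) (i : Fin n) :
    coordRestrict J v i = if i ∈ J then v i else 0 :=
  rfl

lemma coordRestrict_mem_coordSub (J : Finset (Fin n)) (v : EuclideanSpace ℝ (Fin n)) :
    coordRestrict J v ∈ coordSub J := fun i hi => by
  simp [coordRestrict_apply, hi]

lemma coordRestrict_mem_spSet {J : Finset (Fin n)} (hJ : #J ≤ s) (v : EuclideanSpace ℝ (Fin n)) :
    coordRestrict J v ∈ spSet n s :=
  mem_spSet_iff.2 ((card_le_card (mem_coordSub_iff.1 (coordRestrict_mem_coordSub J v))).trans hJ)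

lemma coordRestrict_sub (J : Finset (Fin n)) (u v : EuclideanSpace ℝ (Fin n)) :
    coordRestrict J (u - v) = coordRestrict J u - coordRestrict J v := by
  ext i
  simp only [coordRestrict_apply, PiLp.sub_apply]
  split_ifs <;> simp

lemma norm_sub_coordRestrict_sq (J : Finset (Fin n)) (v : EuclideanSpace ℝ (Fin n)) :
    ‖v - coordRestrict J v‖ ^ 2 = ∑ i ∈ Jᶜ, v i ^ 2 := by
  rw [EuclideanSpace.norm_sq_eq, ← univ_inter Jᶜ, ← sum_ite_mem]
  refine sum_congr rfl fun i _ => ?_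
  by_cases hi : i ∈ J <;> simp [coordRestrict_apply, hi]

/-- Pythagoras: `z - coordRestrict J z` and `coordRestrict J z - y` have disjoint supports. -/
lemma norm_sub_sq_eq_of_mem_coordSub {J : Finset (Fin n)} {y : EuclideanSpace ℝ (Fin n)}
    (hy : y ∈ coordSub J) (z : EuclideanSpace ℝ (Fin n)) :
    ‖z - y‖ ^ 2 = ‖z - coordRestrict J z‖ ^ 2 + ‖coordRestrict J z - y‖ ^ 2 := by
  simp only [EuclideanSpace.norm_sq_eq, ← sum_add_distrib]
  refine sum_congr rfl fun i _ => ?_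
  by_cases hi : i ∈ J <;> simp [coordRestrict_apply, hi, hy i]

lemma norm_coordRestrict_le (J : Finset (Fin n)) (v : EuclideanSpace ℝ (Fin n)) :
    ‖coordRestrict J v‖ ≤ ‖v‖ := by
  have h := norm_sub_sq_eq_of_mem_coordSub (J := J) (y := 0) (fun _ _ => rfl) v
  rw [sub_zero, sub_zero] at h
  exact (pow_le_pow_iff_left₀ (norm_nonneg _) (norm_nonneg _) two_ne_zero).1
    (by nlinarith [sq_nonneg ‖v - coordRestrict J v‖])

lemma norm_sub_coordRestrict_le {J : Finset (Fin n)} {y : EuclideanSpace ℝ (Fin n)}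
    (hy : y ∈ coordSub J) (z : EuclideanSpace ℝ (Fin n)) :
    ‖z - coordRestrict J z‖ ≤ ‖z - y‖ :=
  (pow_le_pow_iff_left₀ (norm_nonneg _) (norm_nonneg _) two_ne_zero).1
    (by nlinarith [norm_sub_sq_eq_of_mem_coordSub hy z, sq_nonneg ‖coordRestrict J z - y‖])

lemma norm_sub_coordRestrict_swap_sq {J : Finset (Fin n)} {i j : Fin n} (hi : i ∈ J)
    (hj : j ∉ J) (z : EuclideanSpace ℝ (Fin n)) :
    ‖z - coordRestrict (insert j (J.erase i)) z‖ ^ 2 =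
      ‖z - coordRestrict J z‖ ^ 2 + z i ^ 2 - z j ^ 2 := by
  have hij : j ≠ i := fun h => hj (h ▸ hi)
  rw [norm_sub_coordRestrict_sq, norm_sub_coordRestrict_sq, compl_insert, compl_erase,
    erase_insert_of_ne hij.symm, sum_insert (by simp [hi, hij.symm]),
    ← add_sum_erase _ _ (mem_compl.2 hj)]
  ring

lemma card_insert_erase_of_mem_of_notMem {J : Finset (Fin n)} {i j : Fin n} (hi : i ∈ J)
    (hj : j ∉ J) : #(insert j (J.erase i)) = #J := by
  rw [card_insert_of_notMem fun h => hj (mem_of_mem_erase h), card_erase_add_one hi]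

lemma isClosed_coordSub (J : Finset (Fin n)) : IsClosed (coordSub J) := by
  simp only [coordSub, Set.ofPred_forall]
  exact isClosed_iInter fun i => isClosed_iInter fun _ => isClosed_eq (by fun_prop) continuous_const

lemma isClosed_spSet : IsClosed (spSet n s) := by
  have : spSet n s = ⋃ J ∈ {J : Finset (Fin n) | #J ≤ s}, coordSub J := by
    ext v
    simp only [Set.mem_iUnion, Set.mem_ofPred_eq, mem_coordSub_iff, exists_prop]
    exact ⟨fun hv => ⟨_, hv, subset_rfl⟩, fun ⟨J, hJ, hvJ⟩ => (card_le_card hvJ).trans hJ⟩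
  rw [this]
  exact (Set.toFinite _).isClosed_biUnion fun J _ => isClosed_coordSub J

lemma eventually_coordSupport_subset (p : EuclideanSpace ℝ (Fin n)) :
    ∀ᶠ v in 𝓝 p, coordSupport p ⊆ coordSupport v := by
  have : ∀ᶠ v in 𝓝 p, ∀ i ∈ coordSupport p, v i ≠ 0 :=
    (eventually_all_finset _).2 fun i hi =>
      ContinuousAt.eventually_ne (by fun_prop) (mem_coordSupport.1 hi)
  filter_upwards [this] with v hv i hi using mem_coordSupport.2 (hv i hi)

lemma mem_projSet_of_norm_le {A : Set (EuclideanSpace ℝ (Fin n))}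
    {z x y : EuclideanSpace ℝ (Fin n)} (hy : y ∈ projSet A z) (hx : x ∈ A)
    (h : ‖z - x‖ ≤ ‖z - y‖) : x ∈ projSet A z :=
  ⟨hx, fun u hu => h.trans (hy.2 u hu)⟩

lemma eq_coordRestrict_of_mem_projSet {z y : EuclideanSpace ℝ (Fin n)} {J : Finset (Fin n)}
    (hy : y ∈ projSet (spSet n s) z) (hJ : coordSupport y ⊆ J) (hJs : #J ≤ s) :
    y = coordRestrict J z := by
  have hopt := hy.2 _ (coordRestrict_mem_spSet hJs z)
  have : ‖coordRestrict J z - y‖ = 0 := by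
    nlinarith [norm_sub_sq_eq_of_mem_coordSub (mem_coordSub_iff.2 hJ) z,
      pow_le_pow_left₀ (norm_nonneg _) hopt 2, norm_nonneg (coordRestrict J z - y)]
  exact (sub_eq_zero.1 (norm_eq_zero.1 this)).symm

lemma sq_le_sq_of_mem_projSet {z y : EuclideanSpace ℝ (Fin n)} {J : Finset (Fin n)} {i j : Fin n}
    (hy : y ∈ projSet (spSet n s) z) (hJ : coordSupport y ⊆ J) (hJs : #J ≤ s) (hi : i ∈ J)
    (hj : j ∉ J) : z j ^ 2 ≤ z i ^ 2 := by
  have hopt := hy.2 _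
    (coordRestrict_mem_spSet ((card_insert_erase_of_mem_of_notMem hi hj).trans_le hJs) z)
  rw [eq_coordRestrict_of_mem_projSet hy hJ hJs] at hopt
  nlinarith [norm_sub_coordRestrict_swap_sq hi hj z, pow_le_pow_left₀ (norm_nonneg _) hopt 2]

lemma coordRestrict_eq_of_projSet_eq_singleton {z p : EuclideanSpace ℝ (Fin n)}
    (hp : projSet (spSet n s) z = {p}) {J : Finset (Fin n)} (hJ : coordSupport p ⊆ J)
    (hJs : #J ≤ s) : coordRestrict J z = p := by
  have hmem := mem_projSet_of_norm_le (hp ▸ Set.mem_singleton p) (coordRestrict_mem_spSet hJs z)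
    (norm_sub_coordRestrict_le (mem_coordSub_iff.2 hJ) z)
  rwa [hp] at hmem

/-- Otherwise swapping `i` and `j` in the support of `p` gives a second nearest point. -/
lemma sq_lt_sq_of_projSet_eq_singleton {z p : EuclideanSpace ℝ (Fin n)}
    (hp : projSet (spSet n s) z = {p}) {i j : Fin n} (hi : i ∈ coordSupport p)
    (hj : j ∉ coordSupport p) : z j ^ 2 < z i ^ 2 := by
  by_contra! hle
  have hpP : p ∈ projSet (spSet n s) z := hp ▸ Set.mem_singleton p
  set S := coordSupport p
  have hS : #S ≤ s := mem_spSet_iff.1 hpP.1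
  have hpz : p = coordRestrict S z := eq_coordRestrict_of_mem_projSet hpP subset_rfl hS
  have hswap : coordRestrict (insert j (S.erase i)) z ∈ projSet (spSet n s) z := by
    refine mem_projSet_of_norm_le hpP
      (coordRestrict_mem_spSet ((card_insert_erase_of_mem_of_notMem hi hj).trans_le hS) z)
      ((pow_le_pow_iff_left₀ (norm_nonneg _) (norm_nonneg _) two_ne_zero).1 ?_)
    rw [norm_sub_coordRestrict_swap_sq hi hj, ← hpz]
    linarith
  rw [hp, Set.mem_singleton_iff] at hswap
  have hij : i ≠ j := fun h => hj (h ▸ hi)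
  apply mem_coordSupport.1 hi
  rw [← hswap, coordRestrict_apply, if_neg (by simp [hij])]

/-- The strict gap of `sq_lt_sq_of_projSet_eq_singleton` persists near `z`, so a best
approximation of `z'` is `coordRestrict J z'` for some `J ⊇ coordSupport p`, while
`p = coordRestrict J z`. -/
lemma eventually_norm_sub_le_of_projSet_eq_singleton {z p : EuclideanSpace ℝ (Fin n)}
    (hp : projSet (spSet n s) z = {p}) (hsn : s ≤ n) :
    ∀ᶠ z' in 𝓝 z, ∀ y ∈ projSet (spSet n s) z', ‖y - p‖ ≤ ‖z' - z‖ := by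
  have hpP : p ∈ projSet (spSet n s) z := hp ▸ Set.mem_singleton p
  have hgap : ∀ᶠ z' in 𝓝 z, ∀ i ∈ coordSupport p, ∀ j ∈ (coordSupport p)ᶜ, z' j ^ 2 < z' i ^ 2 :=
    (eventually_all_finset _).2 fun i hi => (eventually_all_finset _).2 fun j hj =>
      ContinuousAt.eventually_lt (by fun_prop) (by fun_prop)
        (sq_lt_sq_of_projSet_eq_singleton hp hi (mem_compl.1 hj))
  filter_upwards [hgap] with z' hz' y hy
  obtain ⟨J, hyJ, hJ⟩ := exists_coordSupport_subset_card_eq hy.1 hsn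
  have hSJ : coordSupport p ⊆ J := by
    intro i hi
    by_contra hiJ
    obtain ⟨j, hj, hjS⟩ := exists_mem_notMem_of_card_lt_card (s := coordSupport p)
      (t := insert i J) (by
        rw [card_insert_of_notMem hiJ, hJ]
        exact Nat.lt_succ_of_le (mem_spSet_iff.1 hpP.1))
    have hjJ : j ∈ J := (mem_insert.1 hj).resolve_left fun h => hjS (h ▸ hi)
    exact (sq_le_sq_of_mem_projSet hy hyJ hJ.le hjJ hiJ).not_gt (hz' i hi j (mem_compl.2 hjS))
  calc ‖y - p‖ = ‖coordRestrict J (z' - z)‖ := by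
        rw [coordRestrict_sub, ← eq_coordRestrict_of_mem_projSet hy hyJ hJ.le,
          coordRestrict_eq_of_projSet_eq_singleton hp hSJ hJ.le]
    _ ≤ ‖z' - z‖ := norm_coordRestrict_le J _

end SparseProjection

open SparseProjection

section Optimization

variable {E : Type*} [NormedAddCommGroup E] [InnerProductSpace ℝ E] [CompleteSpace E]
  {f : E → ℝ} {f' : E → E} {L : ℝ}

theorem descent_lemma (hgrad : ∀ x, HasGradientAt f (f' x) x)
    (hlip : ∀ x y, ‖f' x - f' y‖ ≤ L * ‖x - y‖) (x y : E) :
    f y ≤ f x + inner ℝ (f' x) (y - x) + L / 2 * ‖y - x‖ ^ 2 := by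
  set v := y - x
  let g : ℝ → ℝ := fun t => f (x + t • v) - t * inner ℝ (f' x) v - L / 2 * t ^ 2 * ‖v‖ ^ 2
  have hg : ∀ t, HasDerivAt g (inner ℝ (f' (x + t • v) - f' x) v - L * t * ‖v‖ ^ 2) t := by
    intro t
    have hline : HasDerivAt (fun t : ℝ => x + t • v) v t := by
      simpa using ((hasDerivAt_id t).smul_const v).const_add x
    have hf : HasDerivAt (fun t => f (x + t • v)) (inner ℝ (f' (x + t • v)) v) t := by
      have h := (hgrad (x + t • v)).hasFDerivAt.comp_hasDerivAt t hline
      simp only [InnerProductSpace.toDual_apply_apply] at h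
      exact h
    have hlin : HasDerivAt (fun t : ℝ => t * inner ℝ (f' x) v) (inner ℝ (f' x) v) t := by
      simpa using (hasDerivAt_id t).mul_const (inner ℝ (f' x) v)
    have hquad : HasDerivAt (fun t : ℝ => L / 2 * t ^ 2 * ‖v‖ ^ 2) (L * t * ‖v‖ ^ 2) t := by
      refine (((hasDerivAt_pow 2 t).const_mul (L / 2)).mul_const (‖v‖ ^ 2)).congr_deriv ?_
      ring
    rw [inner_sub_left]
    exact (hf.sub hlin).sub hquad
  have hg' : ∀ t ∈ interior (Set.Icc (0 : ℝ) 1),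
      inner ℝ (f' (x + t • v) - f' x) v - L * t * ‖v‖ ^ 2 ≤ 0 := by
    intro t ht
    rw [interior_Icc] at ht
    have hL := hlip (x + t • v) x
    rw [add_sub_cancel_left, norm_smul, Real.norm_of_nonneg ht.1.le] at hL
    nlinarith [real_inner_le_norm (f' (x + t • v) - f' x) v, norm_nonneg v,
      mul_le_mul_of_nonneg_right hL (norm_nonneg v)]
  have hanti := antitoneOn_of_hasDerivWithinAt_nonpos (convex_Icc 0 1)
    (fun t _ => (hg t).continuousAt.continuousWithinAt) (fun t _ => (hg t).hasDerivWithinAt) hg'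
  have hg01 := hanti (Set.left_mem_Icc.2 zero_le_one) (Set.right_mem_Icc.2 zero_le_one) zero_le_one
  simp only [g, one_smul, zero_smul, add_zero, one_pow, one_mul, mul_one, zero_mul, ne_eq,
    OfNat.ofNat_ne_zero, not_false_eq_true, zero_pow, mul_zero, sub_zero] at hg01
  rw [show x + v = y from add_sub_cancel x y] at hg01
  linarith

theorem sub_le_mul_norm_of_lipschitz_gradient (hgrad : ∀ x, HasGradientAt f (f' x) x)
    (hlip : ∀ x y, ‖f' x - f' y‖ ≤ L * ‖x - y‖) (x y : E) :
    f y - f x ≤ (‖f' x‖ + L / 2 * ‖y - x‖) * ‖y - x‖ := by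
  nlinarith [descent_lemma hgrad hlip x y, real_inner_le_norm (f' x) (y - x)]

end Optimization

theorem tendsto_zero_of_sufficient_decrease {a d : ℕ → ℝ} {c : ℝ} (hc : 0 < c)
    (hdec : ∀ k, a (k + 1) + c * d k ^ 2 ≤ a k) (hbdd : BddBelow (Set.range a)) :
    Tendsto d atTop (𝓝 0) := by
  have hanti : Antitone a := antitone_nat_of_succ_le fun k => by
    nlinarith [hdec k, mul_nonneg hc.le (sq_nonneg (d k))]
  have hlim := tendsto_atTop_ciInf hanti hbdd
  have hgap : Tendsto (fun k => √((a k - a (k + 1)) / c)) atTop (𝓝 0) := by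
    simpa using ((hlim.sub (hlim.comp (tendsto_add_atTop_nat 1))).div_const c).sqrt
  refine squeeze_zero_norm (fun k => ?_) hgap
  rw [Real.norm_eq_abs]
  exact Real.abs_le_sqrt (by rw [le_div_iff₀ hc]; linarith [hdec k])

section ProjectedGradient

variable {n : ℕ} {f : EuclideanSpace ℝ (Fin n) → ℝ}
  {f' : EuclideanSpace ℝ (Fin n) → EuclideanSpace ℝ (Fin n)} {L lam : ℝ}

theorem sufficient_decrease_of_mem_projSet (hgrad : ∀ x, HasGradientAt f (f' x) x)
    (hlip : ∀ x y, ‖f' x - f' y‖ ≤ L * ‖x - y‖) (hlam : 0 < lam)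
    {A : Set (EuclideanSpace ℝ (Fin n))} {x y : EuclideanSpace ℝ (Fin n)} (hx : x ∈ A)
    (hy : y ∈ projSet A (x - lam • f' x)) :
    f y + (1 / (2 * lam) - L / 2) * ‖y - x‖ ^ 2 ≤ f x := by
  have hopt := hy.2 x hx
  rw [show x - lam • f' x - y = -((y - x) + lam • f' x) by abel,
    show x - lam • f' x - x = -(lam • f' x) by abel, norm_neg, norm_neg] at hopt
  have hsq := pow_le_pow_left₀ (norm_nonneg _) hopt 2
  rw [norm_add_sq_real, real_inner_smul_right] at hsq
  have hinner : inner ℝ (f' x) (y - x) + 1 / (2 * lam) * ‖y - x‖ ^ 2 ≤ 0 := by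
    rw [real_inner_comm, show inner ℝ (y - x) (f' x) + 1 / (2 * lam) * ‖y - x‖ ^ 2 =
      (‖y - x‖ ^ 2 + 2 * (lam * inner ℝ (y - x) (f' x))) / (2 * lam) by field_simp; ring]
    exact div_nonpos_of_nonpos_of_nonneg (by linarith) (by positivity)
  linarith [descent_lemma hgrad hlip x y]

theorem tendsto_succ_sub_of_projected_gradient (hL : 0 < L)
    (hgrad : ∀ x, HasGradientAt f (f' x) x) (hlip : ∀ x y, ‖f' x - f' y‖ ≤ L * ‖x - y‖)
    (hlam0 : 0 < lam) (hlamL : lam < 1 / L) {A : Set (EuclideanSpace ℝ (Fin n))}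
    (hbdd : BddBelow (f '' A)) {w : ℕ → EuclideanSpace ℝ (Fin n)} (hwA : ∀ k, w k ∈ A)
    (hiter : ∀ k, w (k + 1) ∈ projSet A (w k - lam • f' (w k))) :
    Tendsto (fun k => w (k + 1) - w k) atTop (𝓝 0) := by
  have hc : 0 < 1 / (2 * lam) - L / 2 := by
    have hlamL' : lam * L < 1 := (lt_div_iff₀ hL).1 hlamL
    rw [show 1 / (2 * lam) - L / 2 = (1 - lam * L) / (2 * lam) by field_simp]
    exact div_pos (by linarith) (by positivity)
  exact tendsto_zero_iff_norm_tendsto_zero.2 <|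
    tendsto_zero_of_sufficient_decrease (a := fun k => f (w k)) hc
      (fun k => sufficient_decrease_of_mem_projSet hgrad hlip hlam0 (hwA k) (hiter k))
      (hbdd.mono (Set.range_subset_iff.2 fun k => Set.mem_image_of_mem f (hwA k)))

end ProjectedGradient

theorem mem_projSet_of_tendsto {n : ℕ} {ι : Type*} {l : Filter ι} [l.NeBot]
    {A : Set (EuclideanSpace ℝ (Fin n))} (hA : IsClosed A) {y z : ι → EuclideanSpace ℝ (Fin n)}
    {y₀ z₀ : EuclideanSpace ℝ (Fin n)} (hyz : ∀ k, y k ∈ projSet A (z k))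
    (hy : Tendsto y l (𝓝 y₀)) (hz : Tendsto z l (𝓝 z₀)) : y₀ ∈ projSet A z₀ :=
  ⟨hA.mem_of_tendsto hy (Eventually.of_forall fun k => (hyz k).1), fun x hx =>
    le_of_tendsto_of_tendsto' (hz.sub hy).norm (hz.sub tendsto_const_nhds).norm
      fun k => (hyz k).2 x hx⟩

theorem le_pow_mul_of_local_contraction {r : ℕ → ℝ} {ε γ : ℝ} {k₀ : ℕ} (hγ0 : 0 ≤ γ)
    (hγ1 : γ ≤ 1) (hstep : ∀ k, r k < ε → r (k + 1) ≤ γ * r k) (hr₀ : 0 ≤ r k₀)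
    (hk₀ : r k₀ < ε) : ∀ m, r (k₀ + m) ≤ γ ^ m * r k₀
  | 0 => by simp
  | m + 1 => by
    have ih := le_pow_mul_of_local_contraction hγ0 hγ1 hstep hr₀ hk₀ m
    have hlt : r (k₀ + m) < ε :=
      ih.trans_lt ((mul_le_of_le_one_left hr₀ (pow_le_one₀ hγ0 hγ1)).trans_lt hk₀)
    calc r (k₀ + (m + 1)) ≤ γ * r (k₀ + m) := hstep _ hlt
      _ ≤ γ * (γ ^ m * r k₀) := mul_le_mul_of_nonneg_left ih hγ0
      _ = γ ^ (m + 1) * r k₀ := by ring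

theorem exists_le_geometric_of_le_geometric_from {a : ℕ → ℝ} {D γ : ℝ} {k₀ : ℕ} (hγ0 : 0 ≤ γ)
    (hγ1 : γ < 1) (h : ∀ m, a (k₀ + m) ≤ D * γ ^ m) :
    ∃ C > 0, ∃ ρ : ℝ, 0 < ρ ∧ ρ < 1 ∧ ∀ k, a k ≤ C * ρ ^ k := by
  set ρ : ℝ := max γ 2⁻¹
  have hρ0 : 0 < ρ := lt_max_of_lt_right (by norm_num)
  have hρ1 : ρ < 1 := max_lt hγ1 (by norm_num)
  set M := ∑ k ∈ range k₀, |a k| + |D| + 1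
  have hD : |D| ≤ M := by
    have := sum_nonneg fun k (_ : k ∈ range k₀) => abs_nonneg (a k)
    linarith
  have hM : 0 < M := by positivity
  refine ⟨M / ρ ^ k₀, by positivity, ρ, hρ0, hρ1, fun k => ?_⟩
  rcases lt_or_ge k k₀ with hk | hk
  · calc a k ≤ |a k| := le_abs_self _
      _ ≤ M := by
        linarith [single_le_sum (fun i _ => abs_nonneg (a i)) (mem_range.2 hk), abs_nonneg D]
      _ = M / ρ ^ k₀ * ρ ^ k₀ := (div_mul_cancel₀ _ (by positivity)).symm
      _ ≤ M / ρ ^ k₀ * ρ ^ k :=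
        mul_le_mul_of_nonneg_left (pow_le_pow_of_le_one hρ0.le hρ1.le hk.le) (by positivity)
  · obtain ⟨m, rfl⟩ := Nat.exists_eq_add_of_le hk
    calc a (k₀ + m) ≤ D * γ ^ m := h m
      _ ≤ |D| * ρ ^ m :=
        mul_le_mul (le_abs_self D) (pow_le_pow_left₀ hγ0 (le_max_left _ _) m) (by positivity)
          (abs_nonneg D)
      _ ≤ M * ρ ^ m := by gcongr
      _ = M / ρ ^ k₀ * ρ ^ (k₀ + m) := by rw [pow_add]; field_simp

/-- Points near `p` have support containing that of `p`, so `v` and `p` share a coordinate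
subspace on which `T` contracts; the projection is then locally `1`-Lipschitz onto `p`. -/
theorem exists_local_contraction {n s : ℕ} (hsn : s ≤ n)
    {T : EuclideanSpace ℝ (Fin n) → EuclideanSpace ℝ (Fin n)} {p : EuclideanSpace ℝ (Fin n)}
    {γ : ℝ} (hγ1 : γ ≤ 1) (hp : projSet (spSet n s) (T p) = {p})
    (hT : ∀ J : Finset (Fin n), #J = s → p ∈ coordSub J →
      ∀ u ∈ coordSub J, ∀ v ∈ coordSub J, ‖T u - T v‖ ≤ γ * ‖u - v‖) :
    ∃ ε > 0, ∀ v ∈ spSet n s, ‖v - p‖ < ε →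
      ∀ y ∈ projSet (spSet n s) (T v), ‖y - p‖ ≤ γ * ‖v - p‖ := by
  obtain ⟨δ₁, hδ₁, hproj⟩ :=
    Metric.eventually_nhds_iff.1 (eventually_norm_sub_le_of_projSet_eq_singleton hp hsn)
  obtain ⟨δ₂, hδ₂, hsupp⟩ := Metric.eventually_nhds_iff.1 (eventually_coordSupport_subset p)
  refine ⟨min δ₁ δ₂, lt_min hδ₁ hδ₂, fun v hv hvp y hy => ?_⟩
  rw [← dist_eq_norm] at hvp
  obtain ⟨J, hvJ, hJ⟩ := exists_coordSupport_subset_card_eq hv hsn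
  have hpJ : p ∈ coordSub J :=
    mem_coordSub_iff.2 ((hsupp (hvp.trans_le (min_le_right _ _))).trans hvJ)
  have hTv := hT J hJ hpJ v (mem_coordSub_iff.2 hvJ) p hpJ
  have hnear : dist (T v) (T p) < δ₁ := by
    rw [dist_eq_norm]
    calc ‖T v - T p‖ ≤ γ * ‖v - p‖ := hTv
      _ ≤ ‖v - p‖ := mul_le_of_le_one_left (norm_nonneg _) hγ1
      _ < δ₁ := (dist_eq_norm v p ▸ hvp).trans_le (min_le_left _ _)
  exact (hproj hnear y hy).trans hTv

theorem stmt9_general {n s : ℕ} (hsn : s ≤ n)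
    (f : EuclideanSpace ℝ (Fin n) → ℝ)
    (f' : EuclideanSpace ℝ (Fin n) → EuclideanSpace ℝ (Fin n))
    (L lam : ℝ) (hL : 0 < L)
    (hgrad : ∀ x, HasGradientAt f (f' x) x)
    (hlip : ∀ x y, ‖f' x - f' y‖ ≤ L * ‖x - y‖)
    (hbdd : BddBelow (f '' spSet n s))
    (hlam0 : 0 < lam) (hlamL : lam < 1 / L)
    (w : ℕ → EuclideanSpace ℝ (Fin n))
    (hw0 : w 0 ∈ spSet n s)
    (hiter : ∀ k, w (k + 1) ∈ projSet (spSet n s) (w k - lam • f' (w k)))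
    (wstar : EuclideanSpace ℝ (Fin n))
    (haccum : ∃ φ : ℕ → ℕ, StrictMono φ ∧ Tendsto (fun k => w (φ k)) atTop (𝓝 wstar))
    (hsingleton : ∃ p, projSet (spSet n s) (wstar - lam • f' wstar) = {p})
    (γ : ℝ) (hγ0 : 0 ≤ γ) (hγ1 : γ < 1)
    (hcontract : ∀ J : Finset (Fin n), J.card = s → wstar ∈ coordSub J →
      ∀ u ∈ coordSub J, ∀ v ∈ coordSub J,
        ‖(u - lam • f' u) - (v - lam • f' v)‖ ≤ γ * ‖u - v‖) :
    ∃ C > 0, ∃ ρ : ℝ, 0 < ρ ∧ ρ < 1 ∧ ∀ k, f (w k) - f wstar ≤ C * ρ ^ k := by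
  have hwA : ∀ k, w k ∈ spSet n s
    | 0 => hw0
    | k + 1 => (hiter k).1
  have hsteps := tendsto_succ_sub_of_projected_gradient hL hgrad hlip hlam0 hlamL hbdd hwA hiter
  obtain ⟨φ, hφ, hlim⟩ := haccum
  have hT : Continuous fun x => x - lam • f' x :=
    continuous_id.sub ((LipschitzWith.of_dist_le' fun x y => by
      simpa only [dist_eq_norm] using hlip x y).continuous.const_smul lam)
  have hfix : projSet (spSet n s) (wstar - lam • f' wstar) = {wstar} := by
    obtain ⟨p, hp⟩ := hsingleton
    have hmem := mem_projSet_of_tendsto isClosed_spSet (fun k => hiter (φ k))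
      (by simpa using (hsteps.comp hφ.tendsto_atTop).add hlim) ((hT.tendsto wstar).comp hlim)
    rw [hp, Set.mem_singleton_iff] at hmem
    rw [hp, hmem]
  obtain ⟨ε, hε, hloc⟩ := exists_local_contraction hsn hγ1.le hfix hcontract
  obtain ⟨k₀, hk₀⟩ : ∃ k₀, ‖w k₀ - wstar‖ < ε :=
    let ⟨k, hk⟩ := ((tendsto_iff_norm_sub_tendsto_zero.1 hlim).eventually (gt_mem_nhds hε)).exists
    ⟨φ k, hk⟩
  set r := ‖w k₀ - wstar‖
  have hdecay := le_pow_mul_of_local_contraction (r := fun k => ‖w k - wstar‖) hγ0 hγ1.le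
    (fun k hk => hloc _ (hwA k) hk _ (hiter k)) (norm_nonneg _) hk₀
  refine exists_le_geometric_of_le_geometric_from (k₀ := k₀)
    (D := (‖f' wstar‖ + L / 2 * r) * r) hγ0 hγ1 fun m => ?_
  have hm : ‖w (k₀ + m) - wstar‖ ≤ γ ^ m * r := hdecay m
  have hm' : ‖w (k₀ + m) - wstar‖ ≤ r :=
    hm.trans (mul_le_of_le_one_left (norm_nonneg _) (pow_le_one₀ hγ0 hγ1.le))
  calc f (w (k₀ + m)) - f wstar
      ≤ (‖f' wstar‖ + L / 2 * ‖w (k₀ + m) - wstar‖) * ‖w (k₀ + m) - wstar‖ :=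
        sub_le_mul_norm_of_lipschitz_gradient hgrad hlip _ _
    _ ≤ (‖f' wstar‖ + L / 2 * r) * (γ ^ m * r) := by gcongr
    _ = (‖f' wstar‖ + L / 2 * r) * r * γ ^ m := by ring

/-- R-linear convergence of the objective values of PG under the
singleton-projection and contraction assumptions. -/
theorem stmt9 {n s : ℕ} (hs1 : 1 ≤ s) (hsn : s ≤ n)
    (f : EuclideanSpace ℝ (Fin n) → ℝ)
    (f' : EuclideanSpace ℝ (Fin n) → EuclideanSpace ℝ (Fin n))
    (L lam : ℝ) (hL : 0 < L)
    (hconv : ConvexOn ℝ Set.univ f)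
    (hgrad : ∀ x, HasGradientAt f (f' x) x)
    (hlip : ∀ x y, ‖f' x - f' y‖ ≤ L * ‖x - y‖)
    (hbdd : BddBelow (f '' spSet n s))
    (hlam0 : 0 < lam) (hlamL : lam < 1 / L)
    (w : ℕ → EuclideanSpace ℝ (Fin n))
    (hw0 : w 0 ∈ spSet n s)
    (hiter : ∀ k, w (k + 1) ∈ projSet (spSet n s) (w k - lam • f' (w k)))
    (wstar : EuclideanSpace ℝ (Fin n))
    (haccum : ∃ φ : ℕ → ℕ, StrictMono φ ∧ Tendsto (fun k => w (φ k)) atTop (𝓝 wstar))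
    (hsingleton : ∃ p, projSet (spSet n s) (wstar - lam • f' wstar) = {p})
    (γ : ℝ) (hγ0 : 0 ≤ γ) (hγ1 : γ < 1)
    (hcontract : ∀ J : Finset (Fin n), J.card = s → wstar ∈ coordSub J →
      ∀ u ∈ coordSub J, ∀ v ∈ coordSub J,
        ‖(u - lam • f' u) - (v - lam • f' v)‖ ≤ γ * ‖u - v‖) :
    ∃ C > 0, ∃ ρ : ℝ, 0 < ρ ∧ ρ < 1 ∧ ∀ k, f (w k) - f wstar ≤ C * ρ ^ k :=
  stmt9_general hsn f f' L lam hL hgrad hlip hbdd hlam0 hlamL w hw0 hiter wstar haccum hsingleton γ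
    hγ0 hγ1 hcontract
end
end

section
/- Let {w^k} be a sequence generated by the projected gradient iteration w^{k+1} ∈ P_{A_s}(w^k − λ∇f(w^k)) with w^0 ∈ A_s, and let w* be an accumulation point of {w^k}. Suppose the restricted Kurdyka–Łojasiewicz condition holds at w*: there exist ε > 0, θ ∈ [0,1), and κ > 0 such that for every J ∈ I_{w*} and every w ∈ A_J with ‖w − w*‖ < ε and f(w) > f(w*), one has (f(w) − f(w*))^θ ≤ κ·‖(∇f(w))_J‖. Then the full sequence {w^k} converges to w*. -/
open Filter Topology

noncomputable section

/-!
Projected gradient decreases `f` by `c ‖w (k+1) - w k‖²` with `c = 1/(2λ) - L/2 > 0` (descent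
lemma plus the defining inequality of the projection), so `f (w k)` decreases to `f w*`. Near `w*`
the support of an iterate `y = w (k+1)` contains that of `w*`; completing it to an `s`-set `J`, the
projection onto `A_s` is the projection onto `A_J`, so `(∇f (w k))_J = (w k - y)_J / λ` and the
restricted KL inequality bounds `(f y - f w*)^θ` by a multiple of `‖y - w k‖`. Concavity of
`t ↦ t^(1-θ)` turns these two estimates into `2 d (k+1) ≤ d k + C (Φ (k+1) - Φ (k+2))` for the step
lengths `d` and `Φ k = (f (w k) - f w*)^(1-θ)`. Summing, once an iterate is close enough to `w*`
the whole tail stays close and has finite length, so the sequence is Cauchy and converges to its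
accumulation point `w*`.
-/

open scoped RealInnerProductSpace

theorem one_sub_mul_sub_le_rpow_mul_sub_rpow {a b θ : ℝ} (hb : 0 ≤ b) (hba : b ≤ a) (hθ0 : 0 ≤ θ)
    (hθ1 : θ ≤ 1) : (1 - θ) * (a - b) ≤ a ^ θ * (a ^ (1 - θ) - b ^ (1 - θ)) := by
  rcases (hb.trans hba).eq_or_lt with rfl | ha
  · simp [le_antisymm hba hb]
  set t := b / a
  have hbat : b = a * t := (mul_div_cancel₀ b ha.ne').symm
  have hbern : t ^ (1 - θ) ≤ 1 + (1 - θ) * (t - 1) := by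
    simpa using rpow_one_add_le_one_add_mul_self (s := t - 1)
      (by linarith [show 0 ≤ t by positivity]) (by linarith) (by linarith)
  have hsplit : a ^ θ * b ^ (1 - θ) = a * t ^ (1 - θ) := by
    rw [hbat, Real.mul_rpow ha.le (by positivity), ← mul_assoc, ← Real.rpow_add ha]
    simp
  rw [mul_sub (a ^ θ), hsplit, ← Real.rpow_add ha, add_sub_cancel, Real.rpow_one]
  nlinarith

theorem two_mul_le_add_of_descent_of_kl {c b θ d₀ d₁ e₁ e₂ : ℝ} (hc : 0 < c) (hb : 0 ≤ b)
    (hθ0 : 0 ≤ θ) (hθ1 : θ < 1) (hd₀ : 0 ≤ d₀) (he₂ : 0 ≤ e₂)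
    (hdec : c * d₁ ^ 2 ≤ e₁ - e₂) (hkl : 0 < e₁ → e₁ ^ θ ≤ b * d₀) :
    2 * d₁ ≤ d₀ + b / (c * (1 - θ)) * (e₁ ^ (1 - θ) - e₂ ^ (1 - θ)) := by
  have he : e₂ ≤ e₁ := by nlinarith
  have hθ : 0 < 1 - θ := by linarith
  set Δ := e₁ ^ (1 - θ) - e₂ ^ (1 - θ)
  have hΔ : 0 ≤ Δ := sub_nonneg.2 (Real.rpow_le_rpow he₂ he hθ.le)
  have hslope : e₁ ^ θ * Δ ≤ b * d₀ * Δ := by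
    rcases (he₂.trans he).eq_or_lt with h0 | hpos
    · simp [Δ, ← h0, le_antisymm he (h0 ▸ he₂), Real.zero_rpow hθ.ne']
    · exact mul_le_mul_of_nonneg_right (hkl hpos) hΔ
  have hconc := one_sub_mul_sub_le_rpow_mul_sub_rpow he₂ he hθ0 hθ1.le
  refine two_mul_le_add_of_sq_le_mul hd₀ (by positivity) ?_
  rw [show d₀ * (b / (c * (1 - θ)) * Δ) = b * d₀ * Δ / (c * (1 - θ)) by ring,
    le_div_iff₀ (by positivity)]
  nlinarith

section MetricSpace

variable {E : Type*} [PseudoMetricSpace E]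

theorem summable_dist_succ_of_two_mul_le {x : ℕ → E} {a : E} {δ : ℝ} {Ψ : ℕ → ℝ}
    (hΨ : ∀ k, 0 ≤ Ψ k)
    (hstep : ∀ k, dist (x (k + 1)) a < δ →
      2 * dist (x (k + 1)) (x (k + 2)) ≤ dist (x k) (x (k + 1)) + (Ψ k - Ψ (k + 1)))
    (hstart : dist (x 0) a + 2 * dist (x 0) (x 1) + Ψ 0 < δ) :
    Summable fun k => dist (x k) (x (k + 1)) := by
  set d := fun k => dist (x k) (x (k + 1))
  -- `bound m` controls the path length from `x 0` to `x (m + 1)`, which keeps it in the ball.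
  let bound m := ∑ k ∈ Finset.range m, d (k + 1) + d m ≤ d 0 + Ψ 0 - Ψ m
  have hball : ∀ m, bound m → dist (x (m + 1)) a < δ := fun m hm =>
    calc dist (x (m + 1)) a ≤ dist (x 0) (x (m + 1)) + dist (x 0) a := dist_triangle_left _ _ _
      _ ≤ ∑ k ∈ Finset.range m, d (k + 1) + d 0 + dist (x 0) a := by
        rw [← Finset.sum_range_succ']
        gcongr
        exact dist_le_range_sum_dist x (m + 1)
      _ < δ := by linarith [hΨ m, dist_nonneg (x := x m) (y := x (m + 1))]
  have hbound : ∀ m, bound m := by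
    intro m
    induction m with
    | zero => simp [bound]
    | succ m ih =>
      simp only [bound, Finset.sum_range_succ]
      linarith [hstep m (hball m ih), ih]
  refine summable_of_sum_range_le (fun k => dist_nonneg) (c := 2 * d 0 + Ψ 0) fun m => ?_
  cases m with
  | zero =>
    simp only [Finset.range_zero, Finset.sum_empty]
    linarith [hΨ 0, dist_nonneg (x := x 0) (y := x 1)]
  | succ m =>
    rw [Finset.sum_range_succ']
    linarith [hbound m, hΨ m, dist_nonneg (x := x m) (y := x (m + 1))]

theorem tendsto_of_sufficient_decrease_of_kl [CompleteSpace E] {x : ℕ → E} {a : E} {e : ℕ → ℝ}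
    {c b θ δ : ℝ} (hc : 0 < c) (hb : 0 ≤ b) (hθ0 : 0 ≤ θ) (hθ1 : θ < 1) (hδ : 0 < δ)
    (he0 : ∀ k, 0 ≤ e k) (he : Tendsto e atTop (𝓝 0))
    (hdec : ∀ k, c * dist (x k) (x (k + 1)) ^ 2 ≤ e k - e (k + 1))
    (hkl : ∀ k, dist (x (k + 1)) a < δ → 0 < e (k + 1) →
      e (k + 1) ^ θ ≤ b * dist (x k) (x (k + 1)))
    {φ : ℕ → ℕ} (hφ : StrictMono φ) (hxφ : Tendsto (x ∘ φ) atTop (𝓝 a)) :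
    Tendsto x atTop (𝓝 a) := by
  set d := fun k => dist (x k) (x (k + 1))
  set Ψ := fun k => b / (c * (1 - θ)) * e (k + 1) ^ (1 - θ)
  have hθ : 0 < 1 - θ := by linarith
  have hΨ0 : ∀ k, 0 ≤ Ψ k := fun k => by have := he0 (k + 1); positivity
  have hstep : ∀ k, dist (x (k + 1)) a < δ → 2 * d (k + 1) ≤ d k + (Ψ k - Ψ (k + 1)) :=
    fun k hk => by
      simpa only [Ψ, mul_sub] using two_mul_le_add_of_descent_of_kl hc hb hθ0 hθ1 dist_nonneg
        (he0 (k + 2)) (hdec (k + 1)) (hkl k hk)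
  have hd : Tendsto d atTop (𝓝 0) := by
    have hsq : Tendsto (fun k => d k ^ 2) atTop (𝓝 0) := by
      refine squeeze_zero (fun k => sq_nonneg _) (fun k => ?_)
        (by simpa using ((he.sub (he.comp (tendsto_add_atTop_nat 1))).div_const c))
      rw [le_div_iff₀ hc, mul_comm]
      exact hdec k
    simpa [d] using hsq.sqrt
  have hΨ : Tendsto Ψ atTop (𝓝 0) := by
    simpa [Ψ, Real.zero_rpow hθ.ne'] using
      ((he.comp (tendsto_add_atTop_nat 1)).rpow_const (Or.inr hθ.le)).const_mul
        (b / (c * (1 - θ)))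
  have hstart : Tendsto (fun j => dist (x (φ j)) a + 2 * d (φ j) + Ψ (φ j)) atTop (𝓝 0) := by
    simpa using ((hxφ.dist (tendsto_const_nhds (x := a))).add
      ((hd.comp hφ.tendsto_atTop).const_mul 2)).add (hΨ.comp hφ.tendsto_atTop)
  obtain ⟨j, hj⟩ := (hstart.eventually (gt_mem_nhds hδ)).exists
  have hsum := summable_dist_succ_of_two_mul_le (x := fun k => x (φ j + k))
    (Ψ := fun k => Ψ (φ j + k)) (fun k => hΨ0 _) (fun k hk => hstep (φ j + k) hk) hj
  exact tendsto_nhds_of_cauchySeq_of_subseq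
    ((cauchySeq_shift (φ j)).1 (by simpa only [add_comm] using cauchySeq_of_summable_dist hsum))
    hφ.tendsto_atTop hxφ

end MetricSpace

theorem le_add_inner_add_sq_of_lipschitz_gradient {F : Type*} [NormedAddCommGroup F]
    [InnerProductSpace ℝ F] [CompleteSpace F] {f : F → ℝ} {f' : F → F} {L : ℝ}
    (hgrad : ∀ x, HasGradientAt f (f' x) x) (hlip : ∀ x y, ‖f' x - f' y‖ ≤ L * ‖x - y‖)
    (x y : F) : f y ≤ f x + ⟪f' x, y - x⟫ + L / 2 * ‖y - x‖ ^ 2 := by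
  set v := y - x
  let g : ℝ → ℝ := fun t => f (x + t • v) - t * ⟪f' x, v⟫ - L / 2 * t ^ 2 * ‖v‖ ^ 2
  have hg : ∀ t, HasDerivAt g (⟪f' (x + t • v), v⟫ - ⟪f' x, v⟫ - L * t * ‖v‖ ^ 2) t := by
    intro t
    have hline : HasDerivAt (fun t : ℝ => x + t • v) v t := by
      simpa using ((hasDerivAt_id t).smul_const v).const_add x
    have hf := (hgrad (x + t • v)).hasFDerivAt.comp_hasDerivAt t hline
    simp only [Function.comp_def, InnerProductSpace.toDual_apply_apply] at hf
    have h2 := (hf.sub ((hasDerivAt_id t).mul_const ⟪f' x, v⟫)).sub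
      (((hasDerivAt_pow 2 t).const_mul (L / 2)).mul_const (‖v‖ ^ 2))
    exact h2.congr_deriv (by push_cast; ring)
  have hanti : AntitoneOn g (Set.Ici 0) := by
    refine antitoneOn_of_hasDerivWithinAt_nonpos (convex_Ici 0)
      (fun t _ => (hg t).continuousAt.continuousWithinAt) (fun t _ => (hg t).hasDerivWithinAt)
      fun t ht => ?_
    rw [interior_Ici] at ht
    have hbound : ⟪f' (x + t • v) - f' x, v⟫ ≤ L * t * ‖v‖ ^ 2 :=
      calc ⟪f' (x + t • v) - f' x, v⟫ ≤ ‖f' (x + t • v) - f' x‖ * ‖v‖ := real_inner_le_norm _ _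
        _ ≤ L * ‖t • v‖ * ‖v‖ := by
          gcongr
          simpa using hlip (x + t • v) x
        _ = L * t * ‖v‖ ^ 2 := by
          rw [norm_smul, Real.norm_of_nonneg (le_of_lt ht)]; ring
    rw [inner_sub_left] at hbound
    linarith
  have h10 := hanti Set.self_mem_Ici (Set.mem_Ici.mpr zero_le_one) zero_le_one
  simp only [g, v, one_smul, zero_smul, add_zero, add_sub_cancel, one_mul, one_pow, zero_mul,
    zero_pow two_ne_zero, mul_zero, sub_zero] at h10
  linarith


section Sparse

variable {n s : ℕ}

theorem coordRestrict_apply (J : Finset (Fin n)) (v : EuclideanSpace ℝ (Fin n)) (i : Fin n) :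
    coordRestrict J v i = if i ∈ J then v i else 0 := rfl

theorem coordRestrict_sub (J : Finset (Fin n)) (u v : EuclideanSpace ℝ (Fin n)) :
    coordRestrict J (u - v) = coordRestrict J u - coordRestrict J v := by
  ext i
  by_cases hi : i ∈ J <;> simp [coordRestrict_apply, hi]

theorem norm_coordRestrict_le (J : Finset (Fin n)) (v : EuclideanSpace ℝ (Fin n)) :
    ‖coordRestrict J v‖ ≤ ‖v‖ := by
  refine le_of_sq_le_sq ?_ (norm_nonneg v)
  rw [EuclideanSpace.norm_sq_eq, EuclideanSpace.norm_sq_eq]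
  refine Finset.sum_le_sum fun i _ => ?_
  by_cases hi : i ∈ J <;> simp [coordRestrict_apply, hi, sq_nonneg]

theorem coordRestrict_mem_spSet {J : Finset (Fin n)} (hJ : J.card ≤ s)
    (v : EuclideanSpace ℝ (Fin n)) : coordRestrict J v ∈ spSet n s := by
  refine le_trans (Finset.card_le_card fun i hi => ?_) hJ
  by_contra hiJ
  simp [coordRestrict_apply, hiJ] at hi

theorem norm_sub_sq_eq_of_mem_coordSub {J : Finset (Fin n)} {x : EuclideanSpace ℝ (Fin n)}
    (hx : x ∈ coordSub J) (z : EuclideanSpace ℝ (Fin n)) :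
    ‖z - x‖ ^ 2 = ‖coordRestrict J z - x‖ ^ 2 + ‖z - coordRestrict J z‖ ^ 2 := by
  simp only [EuclideanSpace.norm_sq_eq, ← Finset.sum_add_distrib]
  refine Finset.sum_congr rfl fun i _ => ?_
  by_cases hi : i ∈ J <;> simp [coordRestrict_apply, hi, hx i]

theorem eq_coordRestrict_of_mem_projSet {J : Finset (Fin n)} (hJ : J.card ≤ s)
    {y z : EuclideanSpace ℝ (Fin n)} (hy : y ∈ projSet (spSet n s) z) (hyJ : y ∈ coordSub J) :
    y = coordRestrict J z := by
  have hle := hy.2 _ (coordRestrict_mem_spSet hJ z)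
  have hsq := norm_sub_sq_eq_of_mem_coordSub hyJ z
  have : ‖coordRestrict J z - y‖ ^ 2 ≤ 0 := by nlinarith [norm_nonneg (z - y)]
  exact (sub_eq_zero.1 (norm_eq_zero.1 (pow_eq_zero_iff two_ne_zero |>.1
    (le_antisymm this (sq_nonneg _))))).symm

theorem exists_card_eq_mem_coordSub {y : EuclideanSpace ℝ (Fin n)} (hy : y ∈ spSet n s)
    (hsn : s ≤ n) : ∃ J : Finset (Fin n), J.card = s ∧ y ∈ coordSub J := by
  obtain ⟨J, hJy, -, hJ⟩ := Finset.exists_subsuperset_card_eq (Finset.subset_univ _) hy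
    (by simpa using hsn)
  exact ⟨J, hJ, fun i hi => by_contra fun h => hi (hJy (by simpa using h))⟩

theorem mem_coordSub_of_forall_ne_zero_imp {J : Finset (Fin n)} {v y : EuclideanSpace ℝ (Fin n)}
    (hvy : ∀ i, v i ≠ 0 → y i ≠ 0) (hy : y ∈ coordSub J) : v ∈ coordSub J :=
  fun i hi => by_contra fun h => hvy i h (hy i hi)

theorem eventually_ne_zero_of_ne_zero (w : EuclideanSpace ℝ (Fin n)) :
    ∀ᶠ v in 𝓝 w, ∀ i, w i ≠ 0 → v i ≠ 0 := by
  refine Filter.eventually_all.2 fun i => ?_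
  by_cases h : w i = 0
  · simp [h]
  · exact ((PiLp.continuous_apply 2 _ i).continuousAt.eventually_ne h).mono fun v hv _ => hv

end Sparse

section ProjectedGradient

variable {n s : ℕ}

theorem norm_sq_add_two_mul_inner_le_of_mem_projSet {A : Set (EuclideanSpace ℝ (Fin n))}
    {x y u : EuclideanSpace ℝ (Fin n)} (hx : x ∈ A) (hy : y ∈ projSet A (x - u)) :
    ‖y - x‖ ^ 2 + 2 * ⟪u, y - x⟫ ≤ 0 := by
  have h := hy.2 x hx
  rw [show x - u - y = -((y - x) + u) by abel, sub_sub_cancel_left, norm_neg, norm_neg] at h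
  have := pow_le_pow_left₀ (norm_nonneg _) h 2
  rw [norm_add_sq_real, real_inner_comm] at this
  linarith

theorem add_mul_norm_sq_le_of_mem_projSet {A : Set (EuclideanSpace ℝ (Fin n))}
    {f : EuclideanSpace ℝ (Fin n) → ℝ} {f' : EuclideanSpace ℝ (Fin n) → EuclideanSpace ℝ (Fin n)}
    {L lam : ℝ} (hlam : 0 < lam) (hgrad : ∀ x, HasGradientAt f (f' x) x)
    (hlip : ∀ x y, ‖f' x - f' y‖ ≤ L * ‖x - y‖) {x y : EuclideanSpace ℝ (Fin n)} (hx : x ∈ A)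
    (hy : y ∈ projSet A (x - lam • f' x)) :
    f y + (1 / (2 * lam) - L / 2) * ‖y - x‖ ^ 2 ≤ f x := by
  have hproj := norm_sq_add_two_mul_inner_le_of_mem_projSet hx hy
  rw [real_inner_smul_left] at hproj
  have hinner : 1 / (2 * lam) * ‖y - x‖ ^ 2 ≤ -⟪f' x, y - x⟫ := by
    rw [one_div_mul_eq_div, div_le_iff₀ (by positivity)]
    linarith
  linarith [le_add_inner_add_sq_of_lipschitz_gradient hgrad hlip x y]

theorem norm_coordRestrict_le_of_mem_projSet
    {f' : EuclideanSpace ℝ (Fin n) → EuclideanSpace ℝ (Fin n)} {L lam : ℝ} (hlam : 0 < lam)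
    (hlip : ∀ x y, ‖f' x - f' y‖ ≤ L * ‖x - y‖) {J : Finset (Fin n)} (hJ : J.card ≤ s)
    {x y : EuclideanSpace ℝ (Fin n)} (hy : y ∈ projSet (spSet n s) (x - lam • f' x))
    (hyJ : y ∈ coordSub J) :
    ‖coordRestrict J (f' y)‖ ≤ (L + lam⁻¹) * ‖y - x‖ := by
  have hstep : coordRestrict J (f' x) = lam⁻¹ • coordRestrict J (x - y) := by
    rw [eq_coordRestrict_of_mem_projSet hJ hy hyJ]
    ext i
    by_cases hi : i ∈ J <;> simp [coordRestrict_apply, hi, hlam.ne']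
  calc ‖coordRestrict J (f' y)‖
      = ‖coordRestrict J (f' y - f' x) + coordRestrict J (f' x)‖ := by
        rw [coordRestrict_sub, sub_add_cancel]
    _ ≤ ‖coordRestrict J (f' y - f' x)‖ + ‖coordRestrict J (f' x)‖ := norm_add_le _ _
    _ ≤ L * ‖y - x‖ + lam⁻¹ * ‖y - x‖ := by
        gcongr
        · exact (norm_coordRestrict_le _ _).trans (hlip _ _)
        · rw [hstep, norm_smul, Real.norm_of_nonneg (inv_nonneg.2 hlam.le), norm_sub_rev]
          gcongr
          exact norm_coordRestrict_le _ _
    _ = (L + lam⁻¹) * ‖y - x‖ := by ring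

end ProjectedGradient

def RestrictedKLAt {n : ℕ} (s : ℕ) (f : EuclideanSpace ℝ (Fin n) → ℝ)
    (f' : EuclideanSpace ℝ (Fin n) → EuclideanSpace ℝ (Fin n)) (wstar : EuclideanSpace ℝ (Fin n))
    (ε θ κ : ℝ) : Prop :=
  ∀ J : Finset (Fin n), J.card = s → wstar ∈ coordSub J →
    ∀ v ∈ coordSub J, ‖v - wstar‖ < ε → f wstar < f v →
      (f v - f wstar) ^ θ ≤ κ * ‖coordRestrict J (f' v)‖

theorem RestrictedKLAt.rpow_le_of_mem_projSet {n s : ℕ} {f : EuclideanSpace ℝ (Fin n) → ℝ}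
    {f' : EuclideanSpace ℝ (Fin n) → EuclideanSpace ℝ (Fin n)}
    {wstar x y : EuclideanSpace ℝ (Fin n)}
    {ε θ κ L lam : ℝ} (hKL : RestrictedKLAt s f f' wstar ε θ κ) (hsn : s ≤ n) (hκ : 0 ≤ κ)
    (hlam : 0 < lam) (hlip : ∀ x y, ‖f' x - f' y‖ ≤ L * ‖x - y‖)
    (hy : y ∈ projSet (spSet n s) (x - lam • f' x)) (hyε : ‖y - wstar‖ < ε)
    (hsupp : ∀ i, wstar i ≠ 0 → y i ≠ 0) (hf : f wstar < f y) :
    (f y - f wstar) ^ θ ≤ κ * (L + lam⁻¹) * ‖y - x‖ := by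
  obtain ⟨J, hJ, hyJ⟩ := exists_card_eq_mem_coordSub hy.1 hsn
  calc (f y - f wstar) ^ θ ≤ κ * ‖coordRestrict J (f' y)‖ :=
        hKL J hJ (mem_coordSub_of_forall_ne_zero_imp hsupp hyJ) y hyJ hyε hf
    _ ≤ κ * ((L + lam⁻¹) * ‖y - x‖) := by
        gcongr
        exact norm_coordRestrict_le_of_mem_projSet hlam hlip hJ.le hy hyJ
    _ = κ * (L + lam⁻¹) * ‖y - x‖ := by ring

theorem stmt17_general {n s : ℕ} (hsn : s ≤ n)
    (f : EuclideanSpace ℝ (Fin n) → ℝ)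
    (f' : EuclideanSpace ℝ (Fin n) → EuclideanSpace ℝ (Fin n))
    (L lam : ℝ)
    (hgrad : ∀ x, HasGradientAt f (f' x) x)
    (hlip : ∀ x y, ‖f' x - f' y‖ ≤ L * ‖x - y‖)
    (hlam0 : 0 < lam) (hlamL : lam < 1 / L)
    (w : ℕ → EuclideanSpace ℝ (Fin n))
    (hw0 : w 0 ∈ spSet n s)
    (hiter : ∀ k, w (k + 1) ∈ projSet (spSet n s) (w k - lam • f' (w k)))
    (wstar : EuclideanSpace ℝ (Fin n))
    (haccum : ∃ φ : ℕ → ℕ, StrictMono φ ∧ Tendsto (fun k => w (φ k)) atTop (𝓝 wstar))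
    (ε θ κ : ℝ) (hε : 0 < ε) (hθ0 : 0 ≤ θ) (hθ1 : θ < 1) (hκ : 0 < κ)
    (hKL : ∀ J : Finset (Fin n), J.card = s → wstar ∈ coordSub J →
      ∀ v ∈ coordSub J, ‖v - wstar‖ < ε → f wstar < f v →
        (f v - f wstar) ^ θ ≤ κ * ‖coordRestrict J (f' v)‖) :
    Tendsto w atTop (𝓝 wstar) := by
  obtain ⟨φ, hφ, hwφ⟩ := haccum
  have hL : 0 < L := one_div_pos.1 (hlam0.trans hlamL)
  have hc : 0 < 1 / (2 * lam) - L / 2 := by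
    rw [lt_div_iff₀ hL] at hlamL
    rw [sub_pos, div_lt_div_iff₀ two_pos (by positivity)]
    nlinarith
  have hsp : ∀ k, w k ∈ spSet n s := fun k => Nat.casesOn k hw0 fun k => (hiter k).1
  have hdec : ∀ k, f (w (k + 1)) + (1 / (2 * lam) - L / 2) * ‖w (k + 1) - w k‖ ^ 2 ≤ f (w k) :=
    fun k => add_mul_norm_sq_le_of_mem_projSet hlam0 hgrad hlip (hsp k) (hiter k)
  have hanti : Antitone (f ∘ w) :=
    antitone_nat_of_succ_le fun k => le_of_add_le_of_nonneg_left (hdec k) (by positivity)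
  have hf : Tendsto (f ∘ w) atTop (𝓝 (f wstar)) :=
    (tendsto_iff_tendsto_subseq_of_antitone hanti hφ.tendsto_atTop).2
      (((hgrad wstar).continuousAt.tendsto).comp hwφ)
  obtain ⟨δ, hδ, hsupp⟩ := Metric.eventually_nhds_iff.1 (eventually_ne_zero_of_ne_zero wstar)
  refine tendsto_of_sufficient_decrease_of_kl (e := fun k => f (w k) - f wstar)
    (b := κ * (L + lam⁻¹)) (δ := min δ ε) hc (by positivity) hθ0 hθ1 (lt_min hδ hε)
    (fun k => sub_nonneg.2 (hanti.le_of_tendsto hf k)) (by simpa using hf.sub_const (f wstar))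
    (fun k => ?_) (fun k hk hpos => ?_) hφ hwφ
  · rw [dist_comm, dist_eq_norm]
    linarith [hdec k]
  · rw [dist_eq_norm] at hk
    rw [dist_comm, dist_eq_norm]
    exact RestrictedKLAt.rpow_le_of_mem_projSet hKL hsn hκ.le hlam0 hlip (hiter k)
      (hk.trans_le (min_le_right _ _)) (hsupp (hk.trans_le (min_le_left _ _))) (sub_pos.1 hpos)

/-- full convergence of the PG iterates under a restricted KL condition
at an accumulation point. -/
theorem stmt17 {n s : ℕ} (hs1 : 1 ≤ s) (hsn : s ≤ n)
    (f : EuclideanSpace ℝ (Fin n) → ℝ)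
    (f' : EuclideanSpace ℝ (Fin n) → EuclideanSpace ℝ (Fin n))
    (L lam : ℝ) (hL : 0 < L)
    (hconv : ConvexOn ℝ Set.univ f)
    (hgrad : ∀ x, HasGradientAt f (f' x) x)
    (hlip : ∀ x y, ‖f' x - f' y‖ ≤ L * ‖x - y‖)
    (hbdd : BddBelow (f '' spSet n s))
    (hlam0 : 0 < lam) (hlamL : lam < 1 / L)
    (w : ℕ → EuclideanSpace ℝ (Fin n))
    (hw0 : w 0 ∈ spSet n s)
    (hiter : ∀ k, w (k + 1) ∈ projSet (spSet n s) (w k - lam • f' (w k)))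
    (wstar : EuclideanSpace ℝ (Fin n))
    (haccum : ∃ φ : ℕ → ℕ, StrictMono φ ∧ Tendsto (fun k => w (φ k)) atTop (𝓝 wstar))
    (ε θ κ : ℝ) (hε : 0 < ε) (hθ0 : 0 ≤ θ) (hθ1 : θ < 1) (hκ : 0 < κ)
    (hKL : ∀ J : Finset (Fin n), J.card = s → wstar ∈ coordSub J →
      ∀ v ∈ coordSub J, ‖v - wstar‖ < ε → f wstar < f v →
        (f v - f wstar) ^ θ ≤ κ * ‖coordRestrict J (f' v)‖) :
    Tendsto w atTop (𝓝 wstar) :=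
  stmt17_general hsn f f' L lam hgrad hlip hlam0 hlamL w hw0 hiter wstar haccum ε θ κ hε hθ0 hθ1 hκ
    hKL
end
end
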